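/- arXiv:1912.01044 — 2 statements merged into one kernel-verified Lean document; each statement's English description precedes it below -/
import Mathlib

section
/- Let s ≥ 2, N ≥ 1, h ∈ ℝ, and let L be an N×N real matrix. Let a_{i,j} (for 2 ≤ j < i ≤ s), b_j (for 2 ≤ j ≤ s), d_i (for 2 ≤ i ≤ s), and D be N×N real matrices, each of which commutes with L (these play the roles of a_{i,j}(hL), b_j(hL), c_i φ₁(c_i hL), and φ₁(hL)). Let f : ℝ^N → ℝ^N and define g(y) = f(y) − L·y. Define the stages Y₁ = yₙ and, for 2 ≤ i ≤ s, Y_i = yₙ + h·d_i·f(yₙ) + h·∑_{j=2}^{i−1} a_{i,j}·(g(Y_j) − g(yₙ)), and the step y_{n+1} = yₙ + h·D·f(yₙ) + h·∑_{j=2}^{s} b_j·(g(Y_j) − g(yₙ)). Let Â be the (s−1)×(s−1) block matrix with (j,k) block h·L·a_{j,k} (strictly lower triangular in blocks), so that the block matrix E := (I_{s−1} + Â)^{−1} exists. Define α_{i,1} (2 ≤ i ≤ s) as the i-th block of E applied to the block vector (d₂, …, d_s), define the block matrix (α_{i,j})_{2≤i,j≤s} := E·(a_{i,j})_{2≤i,j≤s},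 define β₁ := D − ∑_{j=2}^{s} b_j·(hL)·α_{j,1}, and define (β₂, …, β_s) as the block row vector (b₂, …, b_s)·E. Then for every 2 ≤ i ≤ s one has Y_i = yₙ + h·α_{i,1}·f(yₙ) + h·∑_{j=2}^{i−1} α_{i,j}·(f(Y_j) − f(yₙ)), and y_{n+1} = yₙ + h·β₁·f(yₙ) + h·∑_{j=2}^{s} β_j·(f(Y_j) − f(yₙ)). -/
/-!
Put `Z_i = Y_i - yₙ` and `F_j = f(Y_j) - f(yₙ)`. Since `g(Y_j) - g(yₙ) = F_j - L Z_j` and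
`L` commutes with the `a_{ij}`, the stage equations say `(I + Â) Z = h d f(yₙ) + h a F` for
block vectors. The block matrix `Â` is strictly lower triangular, hence nilpotent, so
`E = (I + Â)⁻¹` is the finite geometric series `∑ (-Â)ᵏ`: it is lower triangular and commutes
with `L`. Hence `Z = h α₁ f(yₙ) + h (E a) F` with `E a` strictly lower triangular, which is the
transformed stage formula. Substituting `Z` into the step, the `F`-coefficients become
`b - b (hL) E a`, and `(hL) E a = E Â = I - E` turns them into `b E`.
-/

open Finset

namespace Matrix

variable {ι R : Type*}

def IsStrictLowerTriangular [LE ι] [Zero R] (A : Matrix ι ι R) : Prop :=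
  ∀ i j, i ≤ j → A i j = 0

section LinearOrder

variable [LinearOrder ι] {A B : Matrix ι ι R}

theorem IsStrictLowerTriangular.isLowerTriangular [Zero R] (hA : A.IsStrictLowerTriangular) :
    A.IsLowerTriangular :=
  fun i j hij => hA i j hij.le

theorem IsLowerTriangular.mul_isStrictLowerTriangular [Fintype ι] [NonUnitalNonAssocSemiring R]
    (hA : A.IsLowerTriangular) (hB : B.IsStrictLowerTriangular) :
    (A * B).IsStrictLowerTriangular := by
  intro i j hij
  rw [mul_apply]
  refine sum_eq_zero fun k _ => ?_
  rcases le_or_gt k i with hki | hik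
  · rw [hB k j (hki.trans hij), mul_zero]
  · rw [hA hik, zero_mul]

theorem IsStrictLowerTriangular.sum_filter_lt_smul [Fintype ι] [Semiring R] {M : Type*}
    [AddCommMonoid M] [Module R M] (hA : A.IsStrictLowerTriangular) (v : ι → M) (i : ι) :
    ∑ j ∈ univ.filter (· < i), A i j • v j = ∑ j, A i j • v j := by
  rw [sum_filter]
  refine sum_congr rfl fun j _ => ?_
  split_ifs with hj
  · rfl
  · rw [hA i j (not_lt.mp hj), zero_smul]

variable [Fintype ι] [DecidableEq ι] [Semiring R]

theorem IsStrictLowerTriangular.scalar_mul (hA : A.IsStrictLowerTriangular) (r : R) :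
    (scalar ι r * A).IsStrictLowerTriangular := by
  rw [scalar_apply]
  exact IsLowerTriangular.mul_isStrictLowerTriangular (blockTriangular_diagonal _) hA

theorem IsStrictLowerTriangular.pow_card_eq_zero (hA : A.IsStrictLowerTriangular) :
    A ^ Fintype.card ι = 0 := by
  let e := (Fintype.orderIsoFinOfCardEq ι rfl).symm
  -- `(A ^ k) i j` is a sum over chains `i > m₁ > ⋯ > j` of length `k`, so it vanishes unless
  -- `i` lies at least `k` places above `j`.
  have key : ∀ k i j, (e i : ℕ) < e j + k → (A ^ k) i j = 0 := by
    intro k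
    induction k with
    | zero =>
      intro i j hij
      exact one_apply_ne fun h => by simp [h] at hij
    | succ k ih =>
      intro i j hij
      rw [pow_succ, mul_apply]
      refine sum_eq_zero fun m _ => ?_
      by_cases hm : (e i : ℕ) < e m + k
      · rw [ih i m hm, zero_mul]
      · have hmj : e m ≤ e j := Fin.le_iff_val_le_val.mpr (by omega)
        rw [hA m j (e.le_iff_le.mp hmj), mul_zero]
  ext i j
  exact key _ i j (by have := (e i).isLt; omega)

theorem IsStrictLowerTriangular.isNilpotent (hA : A.IsStrictLowerTriangular) : IsNilpotent A :=
  ⟨_, hA.pow_card_eq_zero⟩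

end LinearOrder

end Matrix

theorem Commute.ringInverse_right {M₀ : Type*} [MonoidWithZero M₀] {a b : M₀}
    (h : Commute a b) : Commute a (Ring.inverse b) := by
  by_cases hb : IsUnit b
  · obtain ⟨u, rfl⟩ := hb
    rw [Ring.inverse_unit]
    exact h.units_inv_right
  · rw [Ring.inverse_non_unit _ hb]
    exact Commute.zero_right a

theorem Commute.mul_inverse_one_add_mul_mul {R : Type*} [Ring R] {c a : R} (hca : Commute c a)
    (hunit : IsUnit (1 + c * a)) :
    c * (Ring.inverse (1 + c * a) * a) = 1 - Ring.inverse (1 + c * a) := by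
  have hcE : Commute c (Ring.inverse (1 + c * a)) :=
    ((Commute.one_right c).add_right ((Commute.refl c).mul_right hca)).ringInverse_right
  calc c * (Ring.inverse (1 + c * a) * a)
      = Ring.inverse (1 + c * a) * (1 + c * a) - Ring.inverse (1 + c * a) := by
        rw [← mul_assoc, hcE.eq, mul_assoc, mul_add, mul_one, add_sub_cancel_left]
    _ = 1 - Ring.inverse (1 + c * a) := by rw [Ring.inverse_mul_cancel _ hunit]

theorem Ring.inverse_one_add_eq_geom_sum {R : Type*} [Ring R] {x : R} {n : ℕ} (hx : x ^ n = 0) :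
    Ring.inverse (1 + x) = ∑ i ∈ range n, (-x) ^ i := by
  have hunit : IsUnit (1 + x) := IsNilpotent.isUnit_one_add ⟨n, hx⟩
  have hleft : (∑ i ∈ range n, (-x) ^ i) * (1 + x) = 1 := by
    have := geom_sum_mul_neg (-x) n
    rwa [sub_neg_eq_add, neg_pow, hx, mul_zero, sub_zero] at this
  calc Ring.inverse (1 + x) = (∑ i ∈ range n, (-x) ^ i) * (1 + x) * Ring.inverse (1 + x) := by
        rw [hleft, one_mul]
    _ = ∑ i ∈ range n, (-x) ^ i := Ring.mul_inverse_cancel_right _ _ hunit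

namespace Matrix

variable {ι R : Type*} [Fintype ι] [DecidableEq ι] [Ring R]

theorem scalar_commute_iff_forall {r : R} {A : Matrix ι ι R} :
    Commute (scalar ι r) A ↔ ∀ i j, Commute r (A i j) := by
  rw [scalar_commute_iff, ← Matrix.ext_iff]
  simp [Commute, SemiconjBy]

theorem of_smul_mul_eq_scalar_mul {𝕜 : Type*} [SMul 𝕜 R] [IsScalarTower 𝕜 R R] (h : 𝕜) (L : R)
    (a : Matrix ι ι R) : (of fun i j => h • (L * a i j)) = scalar ι (h • L) * a := by
  ext i j
  simp [smul_mul_assoc]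

theorem IsStrictLowerTriangular.isLowerTriangular_inverse_one_add [LinearOrder ι]
    {A : Matrix ι ι R} (hA : A.IsStrictLowerTriangular) :
    (Ring.inverse (1 + A)).IsLowerTriangular := by
  rw [Ring.inverse_one_add_eq_geom_sum hA.pow_card_eq_zero]
  exact sum_mem (S := blockTriangularSubsemiring R OrderDual.toDual)
    fun i _ => hA.isLowerTriangular.neg.pow i

end Matrix

namespace Matrix.Module

open scoped Matrix.Module

variable {ι R M : Type*} [Fintype ι] [DecidableEq ι] [Ring R] [AddCommGroup M] [Module R M]

theorem smul_fun_smul_const (A : Matrix ι ι R) (c : ι → R) (u : M) :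
    (A • fun j => c j • u) = fun i => (A *ᵥ c) i • u := by
  ext i
  simp [mulVec, dotProduct, sum_smul, mul_smul]

theorem sum_smul_smul_apply (b : ι → R) (A : Matrix ι ι R) (v : ι → M) :
    ∑ j, b j • (A • v) j = ∑ k, (b ᵥ* A) k • v k := by
  simp only [smul_apply, vecMul, dotProduct, smul_sum, sum_smul, mul_smul]
  exact sum_comm

end Matrix.Module

namespace ExpRK

open scoped Matrix.Module
open Matrix

variable {𝕜 R M ι : Type*} [CommRing 𝕜] [Ring R] [Algebra 𝕜 R] [AddCommGroup M] [Module R M]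
  [Module 𝕜 M] [IsScalarTower 𝕜 R M] [Fintype ι] [DecidableEq ι] [LinearOrder ι]

theorem nonlinearPart_sub {L : R} {f g : M → M} (hg : ∀ y, g y = f y - L • y) (x y : M) :
    g x - g y = f x - f y - L • (x - y) := by
  rw [hg, hg, smul_sub]
  abel

theorem stage_increments_eq (h : 𝕜) (L : R) (a : Matrix ι ι R)
    (ha : a.IsStrictLowerTriangular) (haL : ∀ i j, Commute L (a i j)) (d : ι → R)
    (f g : M → M) (hg : ∀ y, g y = f y - L • y)
    (yn : M) (Y : ι → M)
    (hY : ∀ i, Y i = yn + h • d i • f yn +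
        h • ∑ j ∈ univ.filter (fun j => j < i), a i j • (g (Y j) - g yn))
    (E : Matrix ι ι R) (hE : E = Ring.inverse (1 + scalar ι (h • L) * a)) :
    (fun i => Y i - yn) =
      h • (fun i => (E *ᵥ d) i • f yn) + h • ((E * a) • fun j => f (Y j) - f yn) := by
  set Z : ι → M := fun i => Y i - yn
  set F : ι → M := fun j => f (Y j) - f yn
  have hunit : IsUnit (1 + scalar ι (h • L) * a) := (ha.scalar_mul _).isNilpotent.isUnit_one_add
  have hZ : Z = h • (fun i => d i • f yn) + h • (a • (F - scalar ι L • Z)) := by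
    ext i
    have hYi := hY i
    simp only [ha.sum_filter_lt_smul, nonlinearPart_sub hg] at hYi
    simp only [Pi.add_apply, Pi.smul_apply, Module.smul_apply, Pi.sub_apply, Module.scalar_smul]
    rw [show Z i = Y i - yn from rfl, hYi]
    abel
  have hAZ : (scalar ι (h • L) * a) • Z = h • (a • scalar ι L • Z) := by
    rw [mul_smul, Module.scalar_smul, smul_assoc, ← Module.scalar_smul L, smul_smul, smul_smul,
      (scalar_commute_iff_forall.mpr haL).eq]
  have hfix : (1 + scalar ι (h • L) * a) • Z = h • (fun i => d i • f yn) + h • (a • F) := by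
    rw [add_smul, one_smul, hAZ]
    nth_rw 1 [hZ]
    rw [smul_sub, smul_sub]
    abel
  calc Z = (E * (1 + scalar ι (h • L) * a)) • Z := by
        rw [hE, Ring.inverse_mul_cancel _ hunit, one_smul]
    _ = _ := by
        rw [mul_smul, hfix, smul_add, smul_comm E h, smul_comm E h,
          Matrix.Module.smul_fun_smul_const, mul_smul]

theorem stages_eq_transformed (h : 𝕜) (L : R) (a : Matrix ι ι R)
    (ha : a.IsStrictLowerTriangular) (haL : ∀ i j, Commute L (a i j)) (d : ι → R)
    (f g : M → M) (hg : ∀ y, g y = f y - L • y)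
    (yn : M) (Y : ι → M)
    (hY : ∀ i, Y i = yn + h • d i • f yn +
        h • ∑ j ∈ univ.filter (fun j => j < i), a i j • (g (Y j) - g yn))
    (Ahat E : Matrix ι ι R) (hAhat : Ahat = of fun i j => h • (L * a i j))
    (hE : E = Ring.inverse (1 + Ahat)) (i : ι) :
    Y i = yn + h • (E *ᵥ d) i • f yn +
      h • ∑ j ∈ univ.filter (fun j => j < i), (E * a) i j • (f (Y j) - f yn) := by
  rw [of_smul_mul_eq_scalar_mul] at hAhat
  subst hAhat
  have hEa : (E * a).IsStrictLowerTriangular := by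
    rw [hE]
    exact (ha.scalar_mul _).isLowerTriangular_inverse_one_add.mul_isStrictLowerTriangular ha
  have hYi := congrFun (stage_increments_eq h L a ha haL d f g hg yn Y hY E hE) i
  simp only [Pi.add_apply, Pi.smul_apply, Module.smul_apply] at hYi
  rw [hEa.sum_filter_lt_smul, add_assoc, ← hYi, add_sub_cancel]

theorem step_eq_transformed (h : 𝕜) (L : R) (a : Matrix ι ι R)
    (ha : a.IsStrictLowerTriangular) (haL : ∀ i j, Commute L (a i j)) (b d : ι → R) (D : R)
    (f g : M → M)
    (hg : ∀ y, g y = f y - L • y) (yn : M) (Y : ι → M) (ynext : M)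
    (hY : ∀ i, Y i = yn + h • d i • f yn +
        h • ∑ j ∈ univ.filter (fun j => j < i), a i j • (g (Y j) - g yn))
    (hynext : ynext = yn + h • D • f yn + h • ∑ j, b j • (g (Y j) - g yn))
    (Ahat E : Matrix ι ι R) (hAhat : Ahat = of fun i j => h • (L * a i j))
    (hE : E = Ring.inverse (1 + Ahat)) :
    ynext = yn + h • (D - ∑ j, b j * (h • L) * (E *ᵥ d) j) • f yn +
      h • ∑ j, (b ᵥ* E) j • (f (Y j) - f yn) := by
  rw [of_smul_mul_eq_scalar_mul] at hAhat
  subst hAhat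
  set Z : ι → M := fun i => Y i - yn
  set F : ι → M := fun j => f (Y j) - f yn
  set c : ι → R := fun j => b j * (h • L)
  have hZ : Z = h • (fun i => (E *ᵥ d) i • f yn) + h • ((E * a) • F) :=
    stage_increments_eq h L a ha haL d f g hg yn Y hY E hE
  have hcE : c ᵥ* (E * a) = b - b ᵥ* E := by
    calc c ᵥ* (E * a) = b ᵥ* (scalar ι (h • L) * (E * a)) := by
          rw [scalar_apply, ← vecMul_vecMul b (diagonal _)]
          congr 1
          ext j
          rw [vecMul_diagonal]
      _ = b - b ᵥ* E := by
          rw [hE, Commute.mul_inverse_one_add_mul_mul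
            (scalar_commute_iff_forall.mpr fun i j => (haL i j).smul_left h)
            (ha.scalar_mul _).isNilpotent.isUnit_one_add, vecMul_sub, vecMul_one]
  have hstep : ynext = yn + h • D • f yn + h • ∑ j, b j • F j - ∑ j, c j • Z j := by
    have hcj : ∀ j, c j • Z j = h • b j • L • Z j := fun j => by
      rw [mul_smul, smul_assoc, smul_comm]
    rw [hynext]
    simp only [nonlinearPart_sub hg, smul_sub, sum_sub_distrib, hcj, ← smul_sum]
    simp only [F, Z, smul_sub, sum_sub_distrib]
    abel
  have hcZ : ∑ j, c j • Z j =
      h • (∑ j, b j * (h • L) * (E *ᵥ d) j) • f yn + h • ∑ k, (b - b ᵥ* E) k • F k := by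
    rw [hZ]
    simp only [Pi.add_apply, Pi.smul_apply, smul_add, sum_add_distrib, smul_comm (c _) h,
      ← smul_sum, Matrix.Module.sum_smul_smul_apply, hcE, ← mul_smul, ← sum_smul]
    rfl
  rw [hstep, hcZ]
  simp only [F, Pi.sub_apply, sub_smul, sum_sub_distrib, smul_sub]
  abel

end ExpRK

theorem exprk_transformation_general {N s : ℕ} (h : ℝ)
    (L : Matrix (Fin N) (Fin N) ℝ)
    (a : Matrix (Fin (s - 1)) (Fin (s - 1)) (Matrix (Fin N) (Fin N) ℝ))
    (ha : ∀ i j : Fin (s - 1), i ≤ j → a i j = 0)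
    (haL : ∀ i j : Fin (s - 1), Commute L (a i j))
    (b : Fin (s - 1) → Matrix (Fin N) (Fin N) ℝ)
    (d : Fin (s - 1) → Matrix (Fin N) (Fin N) ℝ)
    (D : Matrix (Fin N) (Fin N) ℝ)
    (f g : (Fin N → ℝ) → (Fin N → ℝ))
    (hg : ∀ y, g y = f y - L.mulVec y)
    (yn : Fin N → ℝ) (Y : Fin (s - 1) → (Fin N → ℝ)) (ynext : Fin N → ℝ)
    -- the exponential Runge–Kutta stages (stage `1` is `Y₁ = yₙ` and does not appear)
    (hY : ∀ i, Y i = yn + h • (d i).mulVec (f yn) +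
        h • ∑ j ∈ Finset.univ.filter (fun j => j < i), (a i j).mulVec (g (Y j) - g yn))
    (hynext : ynext = yn + h • D.mulVec (f yn) +
        h • ∑ j, (b j).mulVec (g (Y j) - g yn))
    -- the transformed coefficients
    (Ahat E : Matrix (Fin (s - 1)) (Fin (s - 1)) (Matrix (Fin N) (Fin N) ℝ))
    (hAhat : Ahat = Matrix.of fun i j => h • (L * a i j))
    (hE : E = Ring.inverse (1 + Ahat))
    (α₁ : Fin (s - 1) → Matrix (Fin N) (Fin N) ℝ) (hα₁ : α₁ = E.mulVec d)
    (αm : Matrix (Fin (s - 1)) (Fin (s - 1)) (Matrix (Fin N) (Fin N) ℝ))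
    (hαm : αm = E * a)
    (β₁ : Matrix (Fin N) (Fin N) ℝ)
    (hβ₁ : β₁ = D - ∑ j, b j * (h • L) * α₁ j)
    (β : Fin (s - 1) → Matrix (Fin N) (Fin N) ℝ) (hβ : β = Matrix.vecMul b E) :
    (∀ i, Y i = yn + h • (α₁ i).mulVec (f yn) +
        h • ∑ j ∈ Finset.univ.filter (fun j => j < i), (αm i j).mulVec (f (Y j) - f yn)) ∧
      ynext = yn + h • β₁.mulVec (f yn) + h • ∑ j, (β j).mulVec (f (Y j) - f yn) := by
  subst hα₁ hαm hβ₁ hβ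
  exact ⟨ExpRK.stages_eq_transformed h L a ha haL d f g hg yn Y hY Ahat E hAhat hE,
    ExpRK.step_eq_transformed h L a ha haL b d D f g hg yn Y ynext hY hynext Ahat E hAhat hE⟩

/-- Transformation theorem for exponential Runge–Kutta methods.

Stages `2,…,s` are indexed by `Fin (s-1)` (index `i : Fin (s-1)` stands for stage `i+2`).
`a i j` plays the role of `a_{i+2,j+2}(hL)` (strictly lower triangular), `b j` of
`b_{j+2}(hL)`, `d i` of `c_{i+2} φ₁(c_{i+2} hL)`, and `D` of `φ₁(hL)`; all commute
with `L`.  With `g(y) = f(y) − L·y`, stages `Y_i` and the step `ynext` given by the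
exponential Runge–Kutta formulas, and with the transformed coefficients
`E = (I + Â)⁻¹` (`Â` the block matrix with blocks `h·L·a_{j,k}`),
`α_{·,1} = E·(d₂,…,d_s)`, `(α_{i,j}) = E·(a_{i,j})`,
`β₁ = D − ∑_j b_j·(hL)·α_{j,1}`, `(β₂,…,β_s) = (b₂,…,b_s)·E`,
the same stages and step satisfy the transformed formulation in terms of `f` only. -/
theorem exprk_transformation {N s : ℕ} (hN : 1 ≤ N) (hs : 2 ≤ s) (h : ℝ)
    (L : Matrix (Fin N) (Fin N) ℝ)
    (a : Matrix (Fin (s - 1)) (Fin (s - 1)) (Matrix (Fin N) (Fin N) ℝ))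
    (ha : ∀ i j : Fin (s - 1), i ≤ j → a i j = 0)
    (haL : ∀ i j : Fin (s - 1), Commute L (a i j))
    (b : Fin (s - 1) → Matrix (Fin N) (Fin N) ℝ)
    (hbL : ∀ j, Commute L (b j))
    (d : Fin (s - 1) → Matrix (Fin N) (Fin N) ℝ)
    (hdL : ∀ i, Commute L (d i))
    (D : Matrix (Fin N) (Fin N) ℝ) (hDL : Commute L D)
    (f g : (Fin N → ℝ) → (Fin N → ℝ))
    (hg : ∀ y, g y = f y - L.mulVec y)
    (yn : Fin N → ℝ) (Y : Fin (s - 1) → (Fin N → ℝ)) (ynext : Fin N → ℝ)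
    -- the exponential Runge–Kutta stages (stage `1` is `Y₁ = yₙ` and does not appear)
    (hY : ∀ i, Y i = yn + h • (d i).mulVec (f yn) +
        h • ∑ j ∈ Finset.univ.filter (fun j => j < i), (a i j).mulVec (g (Y j) - g yn))
    (hynext : ynext = yn + h • D.mulVec (f yn) +
        h • ∑ j, (b j).mulVec (g (Y j) - g yn))
    -- the transformed coefficients
    (Ahat E : Matrix (Fin (s - 1)) (Fin (s - 1)) (Matrix (Fin N) (Fin N) ℝ))
    (hAhat : Ahat = Matrix.of fun i j => h • (L * a i j))
    (hE : E = Ring.inverse (1 + Ahat))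
    (α₁ : Fin (s - 1) → Matrix (Fin N) (Fin N) ℝ) (hα₁ : α₁ = E.mulVec d)
    (αm : Matrix (Fin (s - 1)) (Fin (s - 1)) (Matrix (Fin N) (Fin N) ℝ))
    (hαm : αm = E * a)
    (β₁ : Matrix (Fin N) (Fin N) ℝ)
    (hβ₁ : β₁ = D - ∑ j, b j * (h • L) * α₁ j)
    (β : Fin (s - 1) → Matrix (Fin N) (Fin N) ℝ) (hβ : β = Matrix.vecMul b E) :
    (∀ i, Y i = yn + h • (α₁ i).mulVec (f yn) +
        h • ∑ j ∈ Finset.univ.filter (fun j => j < i), (αm i j).mulVec (f (Y j) - f yn)) ∧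
      ynext = yn + h • β₁.mulVec (f yn) + h • ∑ j, (β j).mulVec (f (Y j) - f yn) :=
  exprk_transformation_general h L a ha haL b d D f g hg yn Y ynext hY hynext Ahat E hAhat hE α₁ hα₁
    αm hαm β₁ hβ₁ β hβ
end

section
/- Let A be an N₁×N₁ real matrix and B an N₂×N₂ real matrix, and let L = fromBlocks A 0 0 B be the block-diagonal (N₁+N₂)×(N₁+N₂) matrix with diagonal blocks A and B and zero off-diagonal blocks. Then for every integer k ≥ 0, φ_k(L) = fromBlocks (φ_k(A)) 0 0 (φ_k(B)); that is, applying φ_k to a block-diagonal matrix is equivalent to applying φ_k to each individual diagonal block. -/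
/-- The matrix function `φ_k(A) = ∑_{i=0}^∞ A^i / (k+i)!`, over an arbitrary finite index
type. -/
noncomputable def phiMat' {n : Type*} [Fintype n] [DecidableEq n] (k : ℕ)
    (A : Matrix n n ℝ) : Matrix n n ℝ :=
  ∑' i : ℕ, (((k + i).factorial : ℝ))⁻¹ • A ^ i

open Matrix in
lemma fromBlocks_diag_pow {n m R : Type*} [Fintype n] [Fintype m] [DecidableEq n] [DecidableEq m]
    [CommRing R] (A : Matrix n n R) (B : Matrix m m R) (i : ℕ) :
    (fromBlocks A 0 0 B) ^ i = fromBlocks (A ^ i) 0 0 (B ^ i) := by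
  induction i with
  | zero => simp [Matrix.fromBlocks_one]
  | succ i ih =>
    rw [pow_succ, pow_succ, pow_succ, ih, Matrix.fromBlocks_multiply]
    simp

/-- The additive monoid hom sending a pair of matrices to the block diagonal matrix. -/
def fromBlocksDiagHom (n m R : Type*) [AddCommMonoid R] :
    Matrix n n R × Matrix m m R →+ Matrix (n ⊕ m) (n ⊕ m) R where
  toFun p := Matrix.fromBlocks p.1 0 0 p.2
  map_zero' := by simp
  map_add' p q := by
    show Matrix.fromBlocks _ 0 0 _ = Matrix.fromBlocks _ 0 0 _ + Matrix.fromBlocks _ 0 0 _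
    rw [Matrix.fromBlocks_add]
    simp

lemma continuous_fromBlocksDiagHom {n m R : Type*} [AddCommMonoid R] [TopologicalSpace R] :
    Continuous (fromBlocksDiagHom n m R) := by
  apply continuous_matrix
  rintro (i | i) (j | j)
  · exact (continuous_apply j).comp <| (continuous_apply i).comp <| continuous_fst
  · exact continuous_const
  · exact continuous_const
  · exact (continuous_apply j).comp <| (continuous_apply i).comp <| continuous_snd

attribute [local instance] Matrix.linftyOpNormedRing Matrix.linftyOpNormedAlgebra
  Matrix.linfty_opNormOneClass

set_option maxHeartbeats 1000000 in
lemma phi_summable {n : Type*} [Fintype n] [DecidableEq n] (k : ℕ) (A : Matrix n n ℝ) :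
    Summable fun i : ℕ => (((k + i).factorial : ℝ))⁻¹ • A ^ i := by
  cases isEmpty_or_nonempty n with
  | inl h =>
    have : (fun i : ℕ => (((k + i).factorial : ℝ))⁻¹ • A ^ i) = fun _ => 0 := by
      funext i; exact Subsingleton.elim _ _
    rw [this]; exact summable_zero
  | inr h =>
    apply Summable.of_norm
    refine Summable.of_nonneg_of_le (fun i => norm_nonneg _) (fun i => ?_)
      (Real.summable_pow_div_factorial ‖A‖)
    have h1 : ‖(((k + i).factorial : ℝ))⁻¹‖ ≤ ((i.factorial : ℝ))⁻¹ := by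
      rw [Real.norm_eq_abs, abs_of_nonneg (by positivity)]
      apply inv_anti₀
      · exact_mod_cast i.factorial_pos
      · exact_mod_cast Nat.factorial_le (Nat.le_add_left i k)
    rw [norm_smul, div_eq_inv_mul]
    exact mul_le_mul h1 (norm_pow_le A i) (norm_nonneg _) (by positivity)

/-- applying `φ_k` to a block-diagonal matrix
`L = fromBlocks A 0 0 B` is equivalent to applying `φ_k` to each diagonal block:
`φ_k(L) = fromBlocks (φ_k A) 0 0 (φ_k B)`. -/
theorem phiMat_fromBlocks_diagonal {N₁ N₂ : ℕ} (k : ℕ)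
    (A : Matrix (Fin N₁) (Fin N₁) ℝ) (B : Matrix (Fin N₂) (Fin N₂) ℝ) :
    phiMat' k (Matrix.fromBlocks A 0 0 B) =
      Matrix.fromBlocks (phiMat' k A) 0 0 (phiMat' k B) := by
  unfold phiMat'
  have hA := (phi_summable k A).hasSum
  have hB := (phi_summable k B).hasSum
  have h := ((hA.prodMk hB).map (fromBlocksDiagHom _ _ ℝ) continuous_fromBlocksDiagHom)
  have h2 : (fun i : ℕ => (fromBlocksDiagHom (Fin N₁) (Fin N₂) ℝ)
        ((((k + i).factorial : ℝ))⁻¹ • A ^ i, (((k + i).factorial : ℝ))⁻¹ • B ^ i))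
      = fun i : ℕ => (((k + i).factorial : ℝ))⁻¹ • (Matrix.fromBlocks A 0 0 B) ^ i := by
    funext i
    show Matrix.fromBlocks _ 0 0 _ = _
    rw [fromBlocks_diag_pow]
    ext (x | x) (y | y) <;> simp [Matrix.fromBlocks]
  rw [← h2]
  exact h.tsum_eq
end
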